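/- Let p and q be reals with 2 ≤ p ≤ q, let m ≥ 1, A ∈ ℝ^{n×m}, g ∈ ℝ^m, r ∈ ℝ^m with nonnegative entries, and ν > 0. Suppose Δ* maximizes res_p over {Δ : AΔ = 0} with res_p(Δ*) ∈ (ν/2, ν]. Then: (i) there exists Δ with AΔ = 0 and g^⊤Δ + 2∑_e r_e Δ_e² + (ν^{1−q/p}/4)‖Δ‖_q^q ≤ −ν/4; and (ii) if Δ̃ satisfies AΔ̃ = 0 and g^⊤Δ̃ + 2∑_e r_e Δ̃_e² + (ν^{1−q/p}/4)‖Δ̃‖_q^q ≤ −ν/16, then there exists a scalar c ∈ ℝ such that res_p(cΔ̃) ≥ (1/16384)·ν·m^{−(p/(p−1))(1/p−1/q)}. -/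

import Mathlib

/-!
Two facts drive the argument: for `r ≥ 0` and `0 ≤ c ≤ 1`,
`res(cΔ) ≥ c (res Δ + ‖Δ‖_p^p) - c^p ‖Δ‖_p^p`, and the smoothed objective at `Δ` equals
`-res(-Δ) - ‖Δ‖_p^p + κ ‖Δ‖_q^q`.

(i) Comparing `Δ*` with `Δ*/2` gives `‖Δ*‖_p^p ≤ 2 res(Δ*) ≤ 2ν`, so `‖Δ*/2‖_p^p ≤ ν`, every
coordinate of `Δ*/2` is at most `ν^{1/p}` in absolute value, and `κ ‖Δ*/2‖_q^q ≤ ‖Δ*/2‖_p^p / 4`;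
hence `-Δ*/2` has smoothed value at most `-res(Δ*)/2 < -ν/4`.

(ii) Hölder (`‖Δ‖_p^p ≤ m^{1-p/q} (‖Δ‖_q^q)^{p/q}`) followed by Young
(`Q^{p/q} ≤ ν + ν^{1-q/p} Q`) controls `‖Δ̃‖_p^p` by the terms of the smoothed objective. Scaling
`-Δ̃` by `t = m^{-(p/(p-1))(1/p-1/q)} / 32` makes `t^{p-1} ‖Δ̃‖_p^p` small enough that the loss
`t^p ‖Δ̃‖_p^p` is paid by the gain, leaving `res ≥ t ν / 32`.
-/

/-- The residual objective `res_p(Δ) = g^⊤Δ − 2∑_e r_e Δ_e² − ‖Δ‖_p^p`. -/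
noncomputable def res {m : ℕ} (g r : Fin m → ℝ) (p : ℝ) (Δ : Fin m → ℝ) : ℝ :=
  (∑ e, g e * Δ e) - 2 * (∑ e, r e * Δ e ^ 2) - ∑ e, |Δ e| ^ p

open Finset

theorem rpow_rpow_div_cancel {a p : ℝ} (ha : 0 ≤ a) (hp : p ≠ 0) (q : ℝ) :
    (a ^ p) ^ (q / p) = a ^ q := by
  rw [← Real.rpow_mul ha, mul_div_cancel₀ _ hp]

theorem rpow_le_rpow_sub_one_mul {u B s : ℝ} (hu : 0 ≤ u) (huB : u ≤ B) (hs : 1 ≤ s) :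
    u ^ s ≤ B ^ (s - 1) * u := by
  calc u ^ s = u ^ (s - 1) * u := by
        rw [← Real.rpow_add_one' hu (by linarith), sub_add_cancel]
    _ ≤ B ^ (s - 1) * u := by gcongr

theorem rpow_div_le_add_rpow_mul {p q ν Q : ℝ} (hp : 0 < p) (hpq : p ≤ q) (hν : 0 < ν)
    (hQ : 0 ≤ Q) : Q ^ (p / q) ≤ ν + ν ^ (1 - q / p) * Q := by
  have hq : 0 < q := hp.trans_le hpq
  have hpq₁ : p / q ≤ 1 := div_le_one_of_le₀ hpq hq.le
  have hνQ : 0 ≤ ν ^ (1 - q / p) * Q := by positivity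
  have amgm := Real.geom_mean_le_arith_mean2_weighted (by positivity) (by linarith) hνQ hν.le
    (add_sub_cancel (p / q) 1)
  have hexp : (1 - q / p) * (p / q) + (1 - p / q) = 0 := by field_simp; ring
  have hgeom : (ν ^ (1 - q / p) * Q) ^ (p / q) * ν ^ (1 - p / q) = Q ^ (p / q) := by
    rw [Real.mul_rpow (by positivity) hQ, ← Real.rpow_mul hν.le, mul_right_comm,
      ← Real.rpow_add hν, hexp, Real.rpow_zero, one_mul]
  rw [hgeom] at amgm
  nlinarith [mul_le_of_le_one_left hνQ hpq₁, mul_nonneg (div_nonneg hp.le hq.le) hν.le]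

section FiniteSums

variable {ι : Type*} [Fintype ι]

theorem sum_abs_const_mul_rpow (c p : ℝ) (x : ι → ℝ) :
    ∑ e, |c * x e| ^ p = |c| ^ p * ∑ e, |x e| ^ p := by
  simp only [mul_sum, abs_mul, Real.mul_rpow (abs_nonneg c) (abs_nonneg _)]

theorem sum_abs_rpow_le_card_rpow_mul {p q : ℝ} (hp : 0 < p) (hpq : p ≤ q) (x : ι → ℝ) :
    ∑ e, |x e| ^ p ≤ (Fintype.card ι : ℝ) ^ (1 - p / q) * (∑ e, |x e| ^ q) ^ (p / q) := by
  have h := Real.inner_le_weight_mul_Lp_of_nonneg univ ((one_le_div hp).2 hpq)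
    (fun _ => (1 : ℝ)) (fun e => |x e| ^ p) (fun _ => zero_le_one)
    (fun e => Real.rpow_nonneg (abs_nonneg _) _)
  simpa only [one_mul, sum_const, card_univ, nsmul_eq_mul, mul_one, inv_div,
    rpow_rpow_div_cancel (abs_nonneg _) hp.ne'] using h

theorem sum_abs_rpow_le_rpow_mul_sum {p q B : ℝ} (hp : 0 < p) (hpq : p ≤ q) (x : ι → ℝ)
    (hB : ∑ e, |x e| ^ p ≤ B) :
    ∑ e, |x e| ^ q ≤ B ^ (q / p - 1) * ∑ e, |x e| ^ p := by
  rw [mul_sum]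
  refine sum_le_sum fun e _ => ?_
  have hxB : |x e| ^ p ≤ B :=
    (single_le_sum (fun i _ => Real.rpow_nonneg (abs_nonneg (x i)) p) (mem_univ e)).trans hB
  rw [← rpow_rpow_div_cancel (abs_nonneg (x e)) hp.ne' q]
  exact rpow_le_rpow_sub_one_mul (by positivity) hxB ((one_le_div hp).2 hpq)

theorem card_rpow_mul_sum_abs_rpow_le [Nonempty ι] {p q ν : ℝ} (hp : 0 < p) (hpq : p ≤ q)
    (hν : 0 < ν) (x : ι → ℝ) :
    (Fintype.card ι : ℝ) ^ (p / q - 1) * ∑ e, |x e| ^ p ≤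
      ν + ν ^ (1 - q / p) * ∑ e, |x e| ^ q := by
  have hcard : (0 : ℝ) < Fintype.card ι := by exact_mod_cast Fintype.card_pos
  have hcancel :
      (Fintype.card ι : ℝ) ^ (p / q - 1) * (Fintype.card ι : ℝ) ^ (1 - p / q) = 1 := by
    rw [← Real.rpow_add hcard, sub_add_sub_cancel', sub_self, Real.rpow_zero]
  calc (Fintype.card ι : ℝ) ^ (p / q - 1) * ∑ e, |x e| ^ p
      ≤ (Fintype.card ι : ℝ) ^ (p / q - 1) *
          ((Fintype.card ι : ℝ) ^ (1 - p / q) * (∑ e, |x e| ^ q) ^ (p / q)) := by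
        gcongr; exact sum_abs_rpow_le_card_rpow_mul hp hpq x
    _ = (∑ e, |x e| ^ q) ^ (p / q) := by rw [← mul_assoc, hcancel, one_mul]
    _ ≤ ν + ν ^ (1 - q / p) * ∑ e, |x e| ^ q :=
        rpow_div_le_add_rpow_mul hp hpq hν (by positivity)

end FiniteSums

theorem mulVec_const_mul_eq_zero {n m : ℕ} {A : Matrix (Fin n) (Fin m) ℝ} {Δ : Fin m → ℝ}
    (hΔ : A.mulVec Δ = 0) (c : ℝ) : A.mulVec (fun e => c * Δ e) = 0 := by
  rw [show (fun e => c * Δ e) = c • Δ from rfl, Matrix.mulVec_smul, hΔ, smul_zero]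

noncomputable def smoothedObj {m : ℕ} (g r : Fin m → ℝ) (κ q : ℝ) (Δ : Fin m → ℝ) : ℝ :=
  (∑ e, g e * Δ e) + 2 * (∑ e, r e * Δ e ^ 2) + κ * ∑ e, |Δ e| ^ q

section Residual

variable {m : ℕ}

theorem res_const_mul (g r : Fin m → ℝ) (p c : ℝ) (Δ : Fin m → ℝ) :
    res g r p (fun e => c * Δ e) =
      c * (∑ e, g e * Δ e) - 2 * c ^ 2 * (∑ e, r e * Δ e ^ 2) - |c| ^ p * ∑ e, |Δ e| ^ p := by
  simp only [res, sum_abs_const_mul_rpow, mul_sum]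
  congr 2 <;> refine sum_congr rfl fun e _ => by ring

theorem smoothedObj_eq_neg_res_neg (g r : Fin m → ℝ) (κ p q : ℝ) (Δ : Fin m → ℝ) :
    smoothedObj g r κ q Δ =
      -res g r p (fun e => -Δ e) - ∑ e, |Δ e| ^ p + κ * ∑ e, |Δ e| ^ q := by
  simp only [smoothedObj, res, mul_neg, sum_neg_distrib, neg_sq, abs_neg]
  ring

theorem le_res_const_mul (g : Fin m → ℝ) {r : Fin m → ℝ} (hr : ∀ e, 0 ≤ r e) {c : ℝ}
    (hc₀ : 0 ≤ c) (hc₁ : c ≤ 1) (p : ℝ) (Δ : Fin m → ℝ) :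
    c * (res g r p Δ + ∑ e, |Δ e| ^ p) - c ^ p * ∑ e, |Δ e| ^ p ≤
      res g r p (fun e => c * Δ e) := by
  have hR : 0 ≤ ∑ e, r e * Δ e ^ 2 := sum_nonneg fun e _ => by have := hr e; positivity
  rw [res_const_mul, abs_of_nonneg hc₀, res]
  nlinarith [mul_le_of_le_one_left hc₀ hc₁]

theorem sum_abs_rpow_le_two_mul_res {g r : Fin m → ℝ} (hr : ∀ e, 0 ≤ r e) {p : ℝ} (hp : 2 ≤ p)
    {Δ : Fin m → ℝ} (hmax : res g r p (fun e => 1 / 2 * Δ e) ≤ res g r p Δ) :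
    ∑ e, |Δ e| ^ p ≤ 2 * res g r p Δ := by
  have hhalf : (1 / 2 : ℝ) ^ p ≤ 1 / 4 := by
    calc (1 / 2 : ℝ) ^ p ≤ (1 / 2) ^ (2 : ℝ) :=
          Real.rpow_le_rpow_of_exponent_ge (by norm_num) (by norm_num) hp
      _ = 1 / 4 := by norm_num
  have hP : 0 ≤ ∑ e, |Δ e| ^ p := by positivity
  have := le_res_const_mul g hr (by norm_num : (0 : ℝ) ≤ 1 / 2) (by norm_num) p Δ
  nlinarith

theorem smoothedObj_neg_half_le (g : Fin m → ℝ) {r : Fin m → ℝ} (hr : ∀ e, 0 ≤ r e)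
    {p q ν : ℝ} (hp : 1 ≤ p) (hpq : p ≤ q) (hν : 0 < ν) {Δ : Fin m → ℝ}
    (hΔ : ∑ e, |Δ e| ^ p ≤ 2 * ν) :
    smoothedObj g r (ν ^ (1 - q / p) / 4) q (fun e => -(1 / 2) * Δ e) ≤ -res g r p Δ / 2 := by
  have hp₀ : 0 < p := by linarith
  have hhalf : (1 / 2 : ℝ) ^ p ≤ 1 / 2 :=
    Real.rpow_le_self_of_le_one (by norm_num) (by norm_num) hp
  have hP : 0 ≤ ∑ e, |Δ e| ^ p := by positivity
  rw [smoothedObj_eq_neg_res_neg g r _ p]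
  simp only [neg_mul, neg_neg, abs_neg]
  set z : Fin m → ℝ := fun e => 1 / 2 * Δ e
  have hres : res g r p Δ / 2 ≤ res g r p z := by
    have := le_res_const_mul g hr (by norm_num : (0 : ℝ) ≤ 1 / 2) (by norm_num) p Δ
    nlinarith
  have hPz : ∑ e, |z e| ^ p ≤ ν := by
    rw [sum_abs_const_mul_rpow, abs_of_pos (by norm_num : (0 : ℝ) < 1 / 2)]
    nlinarith
  have hPz₀ : 0 ≤ ∑ e, |z e| ^ p := by positivity
  have hν_inv : ν ^ (1 - q / p) * ν ^ (q / p - 1) = 1 := by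
    rw [← Real.rpow_add hν, show 1 - q / p + (q / p - 1) = 0 by ring, Real.rpow_zero]
  have hκQ : ν ^ (1 - q / p) / 4 * ∑ e, |z e| ^ q ≤ (∑ e, |z e| ^ p) / 4 := by
    calc ν ^ (1 - q / p) / 4 * ∑ e, |z e| ^ q
        ≤ ν ^ (1 - q / p) / 4 * (ν ^ (q / p - 1) * ∑ e, |z e| ^ p) := by
          gcongr; exact sum_abs_rpow_le_rpow_mul_sum hp₀ hpq z hPz
      _ = (∑ e, |z e| ^ p) / 4 := by
          rw [← mul_assoc, div_mul_eq_mul_div, hν_inv]; ring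
  linarith

theorem exists_res_const_mul_ge (hm : 1 ≤ m) {g r : Fin m → ℝ} (hr : ∀ e, 0 ≤ r e)
    {p q ν : ℝ} (hp : 2 ≤ p) (hpq : p ≤ q) (hν : 0 < ν) {Δ : Fin m → ℝ}
    (hΔ : smoothedObj g r (ν ^ (1 - q / p) / 4) q Δ ≤ -ν / 16) :
    ∃ c : ℝ, res g r p (fun e => c * Δ e)
      ≥ 1 / 16384 * ν * (m : ℝ) ^ (-(p / (p - 1)) * (1 / p - 1 / q)) := by
  have hp₀ : 0 < p := by linarith
  have hm' : (1 : ℝ) ≤ m := by exact_mod_cast hm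
  have : Nonempty (Fin m) := Fin.pos_iff_nonempty.mp hm
  set μ := (m : ℝ) ^ (-(p / (p - 1)) * (1 / p - 1 / q))
  have hμ₀ : 0 < μ := by positivity
  have hμ₁ : μ ≤ 1 := by
    refine Real.rpow_le_one_of_one_le_of_nonpos hm' ?_
    have : 1 / q ≤ 1 / p := one_div_le_one_div_of_le hp₀ hpq
    have : 0 ≤ p / (p - 1) := div_nonneg hp₀.le (by linarith)
    nlinarith
  set t := μ / 32 with ht
  have ht₀ : 0 < t := by positivity
  have ht₁ : t ≤ 1 := div_le_one_of_le₀ (hμ₁.trans (by norm_num)) (by norm_num)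
  have ht_pow : t ^ (p - 1) ≤ (m : ℝ) ^ (p / q - 1) / 32 := by
    have hμ_pow : μ ^ (p - 1) = (m : ℝ) ^ (p / q - 1) := by
      have : p - 1 ≠ 0 := by linarith
      rw [← Real.rpow_mul (by positivity)]
      congr 1
      field_simp
      ring
    rw [Real.div_rpow hμ₀.le (by norm_num), hμ_pow]
    gcongr
    exact Real.self_le_rpow_of_one_le (by norm_num) (by linarith)
  have hQ : 0 ≤ ν ^ (1 - q / p) * ∑ e, |Δ e| ^ q := by positivity
  have hPt : t ^ (p - 1) * ∑ e, |Δ e| ^ p ≤ (ν + ν ^ (1 - q / p) * ∑ e, |Δ e| ^ q) / 32 := by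
    have hP := card_rpow_mul_sum_abs_rpow_le hp₀ hpq hν Δ
    rw [Fintype.card_fin] at hP
    calc t ^ (p - 1) * ∑ e, |Δ e| ^ p ≤ (m : ℝ) ^ (p / q - 1) / 32 * ∑ e, |Δ e| ^ p := by gcongr
      _ ≤ _ := by rw [div_mul_eq_mul_div]; gcongr
  have hw : ν / 16 + ν ^ (1 - q / p) / 4 * ∑ e, |Δ e| ^ q ≤
      res g r p (fun e => -Δ e) + ∑ e, |Δ e| ^ p := by
    rw [smoothedObj_eq_neg_res_neg g r _ p] at hΔ
    linarith
  have hres := le_res_const_mul g hr ht₀.le ht₁ p (fun e => -Δ e)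
  have htp : t ^ p = t * t ^ (p - 1) := by rw [Real.rpow_sub_one ht₀.ne']; field_simp
  simp only [abs_neg, htp, mul_assoc] at hres
  refine ⟨-t, ?_⟩
  simp only [neg_mul_comm]
  nlinarith [mul_le_mul_of_nonneg_left hPt ht₀.le, mul_le_mul_of_nonneg_left hw ht₀.le,
    mul_nonneg ht₀.le hQ, mul_pos hμ₀ hν]

end Residual

/-- Lemma B.8, qSTOCoracleSmallp, case `p ≤ q`. -/
theorem stmt_11 {n m : ℕ} (hm : 1 ≤ m) {p q : ℝ} (hp : 2 ≤ p) (hpq : p ≤ q)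
    (A : Matrix (Fin n) (Fin m) ℝ) (g r : Fin m → ℝ) (hr : ∀ e, 0 ≤ r e)
    {ν : ℝ} (hν : 0 < ν) (Δs : Fin m → ℝ) (hAs : A.mulVec Δs = 0)
    (hmax : ∀ Δ, A.mulVec Δ = 0 → res g r p Δ ≤ res g r p Δs)
    (hlo : ν / 2 < res g r p Δs) (hhi : res g r p Δs ≤ ν) :
    (∃ Δ : Fin m → ℝ, A.mulVec Δ = 0 ∧
        (∑ e, g e * Δ e) + 2 * (∑ e, r e * Δ e ^ 2)
            + (ν ^ (1 - q / p) / 4) * (∑ e, |Δ e| ^ q) ≤ -ν / 4) ∧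
      ∀ Δt : Fin m → ℝ, A.mulVec Δt = 0 →
        (∑ e, g e * Δt e) + 2 * (∑ e, r e * Δt e ^ 2)
            + (ν ^ (1 - q / p) / 4) * (∑ e, |Δt e| ^ q) ≤ -ν / 16 →
        ∃ c : ℝ, res g r p (fun e => c * Δt e)
          ≥ 1 / 16384 * ν * (m : ℝ) ^ (-(p / (p - 1)) * (1 / p - 1 / q)) := by
  refine ⟨?_, fun Δt _ hΔt => exists_res_const_mul_ge hm hr hp hpq hν hΔt⟩
  have hP : ∑ e, |Δs e| ^ p ≤ 2 * ν :=
    (sum_abs_rpow_le_two_mul_res hr hp (hmax _ (mulVec_const_mul_eq_zero hAs _))).trans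
      (by linarith)
  refine ⟨_, mulVec_const_mul_eq_zero hAs (-(1 / 2)), ?_⟩
  exact (smoothedObj_neg_half_le g hr (by linarith) hpq hν hP).trans (by linarith)
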